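/- For any tripartite density matrix ψ^{ABE} and any POVM {Λ_z} on E, with Υ = Σ_z |z⟩⟨z|_A ⊗ Λ_z^E and any state σ^E, one has Tr[Υ(ψ_Z^{AE} − π^A ⊗ σ^E)] = (Σ_z Tr[(|z⟩⟨z| ⊗ Λ_z)ψ^{AE}]) − 1/d; consequently (P(Z^A|E)_ψ − 1/d)² + F(ψ_Z^{AE}, π^A ⊗ σ^E)² ≤ 1. -/

import Mathlib

open Matrix Kronecker Complex BigOperators
open scoped ComplexOrder Classical

noncomputable section

/-- primitive d-th root of unity -/
def omg (d : ℕ) : ℂ := Complex.exp (2 * Real.pi * Complex.I / d)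

/-- standard basis vector |z⟩ -/
def ketZ (d : ℕ) (z : Fin d) : Fin d → ℂ := fun i => if i = z then 1 else 0

/-- Fourier basis vector |x̃⟩ = (1/√d) Σ_z ω^{xz} |z⟩ -/
def ketX (d : ℕ) (x : Fin d) : Fin d → ℂ :=
  fun z => ((1 / Real.sqrt d : ℝ) : ℂ) * omg d ^ ((x : ℕ) * (z : ℕ))

/-- projector |z⟩⟨z| -/
def projZ (d : ℕ) (z : Fin d) : Matrix (Fin d) (Fin d) ℂ :=
  Matrix.vecMulVec (ketZ d z) (star (ketZ d z))

/-- projector |x̃⟩⟨x̃| -/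
def projX (d : ℕ) (x : Fin d) : Matrix (Fin d) (Fin d) ℂ :=
  Matrix.vecMulVec (ketX d x) (star (ketX d x))

/-- positive semidefinite square root (0 if not PSD) -/
def msqrt {n : Type*} [Fintype n] [DecidableEq n] (M : Matrix n n ℂ) : Matrix n n ℂ :=
  if h : M.PosSemidef then
    (h.1.eigenvectorUnitary : Matrix n n ℂ) * Matrix.diagonal ((↑) ∘ (√·) ∘ h.1.eigenvalues) *
      (star h.1.eigenvectorUnitary : Matrix n n ℂ) else 0

/-- trace norm ‖M‖₁ = Tr √(MᴴM) -/
def trNorm {n : Type*} [Fintype n] [DecidableEq n] (M : Matrix n n ℂ) : ℝ :=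
  (msqrt (Mᴴ * M)).trace.re

/-- fidelity F(ρ,σ) = ‖√ρ√σ‖₁ -/
def Fid {n : Type*} [Fintype n] [DecidableEq n] (ρ σ : Matrix n n ℂ) : ℝ :=
  trNorm (msqrt ρ * msqrt σ)

/-- a POVM with d outcomes -/
def IsPOVM {n : Type*} [Fintype n] [DecidableEq n] {d : ℕ} (Λ : Fin d → Matrix n n ℂ) : Prop :=
  (∀ z, (Λ z).PosSemidef) ∧ ∑ z, Λ z = 1

/-- optimal guessing probability of the measurement with rank-one elements P z on A,
given the B part of the bipartite state ψ -/
def Pguess {d : ℕ} {β : Type*} [Fintype β] [DecidableEq β]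
    (P : Fin d → Matrix (Fin d) (Fin d) ℂ) (ψ : Matrix (Fin d × β) (Fin d × β) ℂ) : ℝ :=
  sSup { r | ∃ Λ : Fin d → Matrix β β ℂ, IsPOVM Λ ∧
    r = (Matrix.trace ((∑ z, P z ⊗ₖ Λ z) * ψ)).re }

/-- dephasing the first (A) system in the standard basis -/
def dephA {d : ℕ} {γ : Type*} [Fintype γ] [DecidableEq γ]
    (M : Matrix (Fin d × γ) (Fin d × γ) ℂ) : Matrix (Fin d × γ) (Fin d × γ) ℂ :=
  ∑ z : Fin d, (projZ d z ⊗ₖ (1 : Matrix γ γ ℂ)) * M * (projZ d z ⊗ₖ (1 : Matrix γ γ ℂ))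

/-- partial trace over the middle (B) system of a tripartite A ⊗ B ⊗ E matrix -/
def ptrB {α β γ : Type*} [Fintype β] (M : Matrix (α × β × γ) (α × β × γ) ℂ) :
    Matrix (α × γ) (α × γ) ℂ :=
  fun p q => ∑ b : β, M (p.1, b, p.2) (q.1, b, q.2)

/-- P(X^A|B)_ψ for a tripartite state ψ^{ABE}: optimal guessing of X on A
by POVMs on B alone. -/
def PX_B {d : ℕ} {β γ : Type*} [Fintype β] [DecidableEq β] [Fintype γ] [DecidableEq γ]
    (ψ : Matrix (Fin d × β × γ) (Fin d × β × γ) ℂ) : ℝ :=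
  sSup { r | ∃ Γ : Fin d → Matrix β β ℂ, IsPOVM Γ ∧
    r = (Matrix.trace ((∑ x, projX d x ⊗ₖ (Γ x ⊗ₖ (1 : Matrix γ γ ℂ))) * ψ)).re }

/-- P(Z^A|E)_ψ for a tripartite state ψ^{ABE}: optimal guessing of Z on A
by POVMs on E alone. -/
def PZ_E {d : ℕ} {β γ : Type*} [Fintype β] [DecidableEq β] [Fintype γ] [DecidableEq γ]
    (ψ : Matrix (Fin d × β × γ) (Fin d × β × γ) ℂ) : ℝ :=
  sSup { r | ∃ Λ : Fin d → Matrix γ γ ℂ, IsPOVM Λ ∧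
    r = (Matrix.trace ((∑ z, projZ d z ⊗ₖ ((1 : Matrix β β ℂ) ⊗ₖ Λ z)) * ψ)).re }

/-- the Z-measured reduced state ψ_Z^{AE} -/
def psiZAE {d : ℕ} {β γ : Type*} [Fintype β] [DecidableEq β] [Fintype γ] [DecidableEq γ]
    (ψ : Matrix (Fin d × β × γ) (Fin d × β × γ) ℂ) : Matrix (Fin d × γ) (Fin d × γ) ℂ :=
  dephA (ptrB ψ)

/-!
Measuring `ρ = ψ_Z^{AE}` and `τ = π^A ⊗ σ^E` with the two-outcome POVM `{Υ, 1 - Υ}` cannot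
decrease their fidelity: inserting `1 = Υ + (1 - Υ)` into `Tr |√ρ √τ| = Tr (V √ρ √τ)`, with `V`
from the polar decomposition, and applying Cauchy–Schwarz to each half gives
`F(ρ, τ) ≤ √(p q) + √((1 - p)(1 - q))` for `p = Tr Υρ` and `q = Tr Υτ = 1/d`. For `p, q ∈ [0, 1]`
this already forces `(p - q)² + F² ≤ 1`, and the bound passes to the supremum over the POVMs on `E`.
-/

section Fidelity

open scoped MatrixOrder

variable {n : Type*} [Fintype n] [DecidableEq n]

lemma msqrt_eq_cfc {M : Matrix n n ℂ} (hM : M.PosSemidef) : msqrt M = cfc Real.sqrt M := by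
  rw [msqrt, dif_pos hM, hM.1.cfc_eq, Matrix.IsHermitian.cfc, Unitary.conjStarAlgAut_apply]
  rfl

lemma posSemidef_msqrt {M : Matrix n n ℂ} (hM : M.PosSemidef) : (msqrt M).PosSemidef := by
  rw [msqrt_eq_cfc hM, ← Matrix.nonneg_iff_posSemidef]
  exact cfc_nonneg fun x _ => Real.sqrt_nonneg x

lemma msqrt_mul_msqrt {M : Matrix n n ℂ} (hM : M.PosSemidef) : msqrt M * msqrt M = M := by
  rw [msqrt_eq_cfc hM, ← cfc_mul Real.sqrt Real.sqrt M]
  conv_rhs => rw [← cfc_id' ℝ M]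
  exact cfc_congr fun x hx => Real.mul_self_sqrt (spectrum_nonneg_of_nonneg hM.nonneg hx)

lemma conjTranspose_msqrt {M : Matrix n n ℂ} (hM : M.PosSemidef) : (msqrt M)ᴴ = msqrt M :=
  (posSemidef_msqrt hM).isHermitian.eq

-- `V = (AᴴA)^{-1/2} Aᴴ` (inverting only on the support) is the adjoint of the partial isometry in
-- the polar decomposition of `A`.
lemma exists_trace_mul_eq_trace_msqrt (A : Matrix n n ℂ) :
    ∃ V : Matrix n n ℂ, (1 - V * Vᴴ).PosSemidef ∧ (V * A).trace = (msqrt (Aᴴ * A)).trace := by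
  have hH : (Aᴴ * A).PosSemidef := Matrix.posSemidef_conjTranspose_mul_self A
  have hcont : ∀ f : ℝ → ℝ, ContinuousOn f (spectrum ℝ (Aᴴ * A)) := fun f =>
    (Matrix.finite_real_spectrum).continuousOn f
  set g := cfc (fun x : ℝ => (√x)⁻¹) (Aᴴ * A)
  have hg : gᴴ = g := IsSelfAdjoint.star_eq (cfc_predicate _ _)
  refine ⟨g * Aᴴ, ?_, ?_⟩
  · have hVV : g * Aᴴ * (g * Aᴴ)ᴴ = cfc (fun x : ℝ => (√x)⁻¹ * x * (√x)⁻¹) (Aᴴ * A) := by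
      rw [cfc_mul (fun x => (√x)⁻¹ * x) _ _ (hcont _) (hcont _),
        cfc_mul _ (fun x => x) _ (hcont _) (hcont _), cfc_id' ℝ (a := Aᴴ * A),
        Matrix.conjTranspose_mul, Matrix.conjTranspose_conjTranspose, hg]
      simp only [Matrix.mul_assoc]
      rfl
    rw [hVV, ← Matrix.le_iff]
    refine cfc_le_one _ _ fun x hx => ?_
    rcases (spectrum_nonneg_of_nonneg hH.nonneg hx).eq_or_lt with rfl | hx0
    · simp
    · rw [mul_right_comm, ← mul_inv, Real.mul_self_sqrt hx0.le, inv_mul_cancel₀ hx0.ne']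
  · rw [Matrix.mul_assoc, msqrt_eq_cfc hH]
    congr 1
    conv_lhs => rw [← cfc_id' ℝ (a := Aᴴ * A)]
    rw [← cfc_mul _ _ _ (hcont _) (hcont _)]
    refine cfc_congr fun x hx => ?_
    rcases (spectrum_nonneg_of_nonneg hH.nonneg hx).eq_or_lt with rfl | hx0
    · simp
    · rw [inv_mul_eq_div, div_eq_iff (Real.sqrt_pos.mpr hx0).ne', Real.mul_self_sqrt hx0.le]

lemma re_trace_mul_nonneg {X Y : Matrix n n ℂ} (hX : X.PosSemidef) (hY : Y.PosSemidef) :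
    0 ≤ (X * Y).trace.re := by
  have h := (hX.conjTranspose_mul_mul_same (msqrt Y)).trace_nonneg
  rw [conjTranspose_msqrt hY, Matrix.trace_mul_cycle, msqrt_mul_msqrt hY,
    Matrix.trace_mul_comm] at h
  exact (Complex.le_def.mp h).1

lemma re_trace_mul_le_re_trace {M W : Matrix n n ℂ} (hM : M.PosSemidef)
    (hW : (1 - W).PosSemidef) : (M * W).trace.re ≤ M.trace.re := by
  have h := re_trace_mul_nonneg hM hW
  rw [Matrix.mul_sub, Matrix.mul_one, Matrix.trace_sub, Complex.sub_re] at h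
  linarith

lemma re_trace_conjTranspose_mul_le (P Q : Matrix n n ℂ) :
    (Pᴴ * Q).trace.re ≤ √(Pᴴ * P).trace.re * √(Qᴴ * Q).trace.re := by
  let _ := Matrix.toMatrixSeminormedAddCommGroup (1 : Matrix n n ℂ) Matrix.PosSemidef.one
  let _ := Matrix.toMatrixInnerProductSpace (1 : Matrix n n ℂ) Matrix.PosSemidef.one
  have hinner : ∀ x y : Matrix n n ℂ, inner ℂ x y = (y * xᴴ).trace := fun x y => by
    change (y * 1 * xᴴ).trace = _
    rw [Matrix.mul_one]
  have hnorm : ∀ x : Matrix n n ℂ, ‖x‖ = √(x * xᴴ).trace.re := fun x => by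
    rw [norm_eq_sqrt_re_inner (𝕜 := ℂ), hinner]
    rfl
  have h := re_inner_le_norm (𝕜 := ℂ) Qᴴ Pᴴ
  rwa [hinner, hnorm, hnorm, Matrix.conjTranspose_conjTranspose,
    Matrix.conjTranspose_conjTranspose, mul_comm (√_)] at h

lemma trace_msqrt_mul_mul_msqrt {X : Matrix n n ℂ} (hX : X.PosSemidef) (G : Matrix n n ℂ) :
    (msqrt X * G * msqrt X).trace = (G * X).trace := by
  rw [Matrix.trace_mul_cycle, msqrt_mul_msqrt hX, Matrix.trace_mul_comm]

lemma re_trace_msqrt_mul_le {X Y G V : Matrix n n ℂ} (hX : X.PosSemidef) (hY : Y.PosSemidef)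
    (hG : G.PosSemidef) (hV : (1 - V * Vᴴ).PosSemidef) :
    (msqrt X * msqrt G * (msqrt G * msqrt Y * V)).trace.re
      ≤ √(G * X).trace.re * √(G * Y).trace.re := by
  set P := msqrt G * msqrt X
  set Q := msqrt G * msqrt Y * V
  have hP : Pᴴ = msqrt X * msqrt G := by
    rw [Matrix.conjTranspose_mul, conjTranspose_msqrt hX, conjTranspose_msqrt hG]
  have hPP : (Pᴴ * P).trace = (G * X).trace := by
    have h : Pᴴ * P = msqrt X * (msqrt G * msqrt G) * msqrt X := by
      simp only [hP, P, Matrix.mul_assoc]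
    rw [h, msqrt_mul_msqrt hG, trace_msqrt_mul_mul_msqrt hX]
  have hQQ : (Qᴴ * Q).trace.re ≤ (G * Y).trace.re := by
    have hGY : (msqrt Y * G * msqrt Y).PosSemidef := by
      simpa [conjTranspose_msqrt hY] using hG.conjTranspose_mul_mul_same (msqrt Y)
    have hQQ' : Qᴴ * Q = Vᴴ * (msqrt Y * (msqrt G * msqrt G) * msqrt Y) * V := by
      simp only [Q, Matrix.conjTranspose_mul, conjTranspose_msqrt hY, conjTranspose_msqrt hG,
        Matrix.mul_assoc]
    rw [hQQ', msqrt_mul_msqrt hG, Matrix.trace_mul_cycle, Matrix.trace_mul_comm,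
      ← trace_msqrt_mul_mul_msqrt hY]
    exact re_trace_mul_le_re_trace (M := msqrt Y * G * msqrt Y) (W := V * Vᴴ) hGY hV
  calc (msqrt X * msqrt G * (msqrt G * msqrt Y * V)).trace.re = (Pᴴ * Q).trace.re := by rw [hP]
    _ ≤ √(Pᴴ * P).trace.re * √(Qᴴ * Q).trace.re := re_trace_conjTranspose_mul_le P Q
    _ ≤ √(G * X).trace.re * √(G * Y).trace.re := by rw [hPP]; gcongr

lemma Fid_le_sqrt_mul_add_sqrt_mul {X Y E : Matrix n n ℂ} (hX : X.PosSemidef) (hY : Y.PosSemidef)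
    (hE : E.PosSemidef) (hE1 : (1 - E).PosSemidef) :
    Fid X Y ≤ √((E * X).trace.re * (E * Y).trace.re)
      + √(((1 - E) * X).trace.re * ((1 - E) * Y).trace.re) := by
  obtain ⟨V, hV, hVtr⟩ := exists_trace_mul_eq_trace_msqrt (msqrt X * msqrt Y)
  have hsplit : msqrt X * msqrt Y * V = msqrt X * msqrt E * (msqrt E * msqrt Y * V)
      + msqrt X * msqrt (1 - E) * (msqrt (1 - E) * msqrt Y * V) := by
    have h1 : msqrt E * msqrt E + msqrt (1 - E) * msqrt (1 - E) = 1 := by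
      rw [msqrt_mul_msqrt hE, msqrt_mul_msqrt hE1, add_sub_cancel]
    calc msqrt X * msqrt Y * V = msqrt X * (msqrt E * msqrt E + msqrt (1 - E) * msqrt (1 - E))
          * msqrt Y * V := by rw [h1, Matrix.mul_one]
      _ = _ := by noncomm_ring
  rw [Fid, trNorm, ← hVtr, Matrix.trace_mul_comm, hsplit, Matrix.trace_add, Complex.add_re,
    Real.sqrt_mul (re_trace_mul_nonneg hE hX), Real.sqrt_mul (re_trace_mul_nonneg hE1 hX)]
  exact add_le_add (re_trace_msqrt_mul_le hX hY hE hV) (re_trace_msqrt_mul_le hX hY hE1 hV)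

lemma Fid_nonneg (ρ τ : Matrix n n ℂ) : 0 ≤ Fid ρ τ :=
  (Complex.le_def.mp
    (posSemidef_msqrt (Matrix.posSemidef_conjTranspose_mul_self _)).trace_nonneg).1

end Fidelity

lemma sq_sub_add_sq_le_one {p q F : ℝ} (hp0 : 0 ≤ p) (hp1 : p ≤ 1) (hq0 : 0 ≤ q) (hq1 : q ≤ 1)
    (hF0 : 0 ≤ F) (hF : F ≤ √(p * q) + √((1 - p) * (1 - q))) : (p - q) ^ 2 + F ^ 2 ≤ 1 := by
  set u := √(p * q)
  set v := √((1 - p) * (1 - q))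
  have hu : u ^ 2 = p * q := Real.sq_sqrt (by positivity)
  have hv : v ^ 2 = (1 - p) * (1 - q) := Real.sq_sqrt (mul_nonneg (by linarith) (by linarith))
  -- AM–GM, since `(u v)² = p (1 - p) · q (1 - q)`
  have huv : 2 * (u * v) ≤ p * (1 - p) + q * (1 - q) := by
    nlinarith [sq_nonneg (p * (1 - p) - q * (1 - q)), mul_nonneg (Real.sqrt_nonneg (p * q))
      (Real.sqrt_nonneg ((1 - p) * (1 - q))), mul_nonneg hp0 (sub_nonneg.mpr hp1),
      mul_nonneg hq0 (sub_nonneg.mpr hq1)]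
  nlinarith

lemma sq_sub_sSup_le {S : Set ℝ} (hS : S.Nonempty) {c b : ℝ} (h : ∀ r ∈ S, (r - c) ^ 2 ≤ b) :
    (sSup S - c) ^ 2 ≤ b := by
  have hmem : ∀ r ∈ S, r ∈ Set.Icc (c - √b) (c + √b) := fun r hr => by
    have := abs_le.mp (Real.abs_le_sqrt (h r hr))
    constructor <;> linarith [this.1, this.2]
  obtain ⟨r, hr⟩ := hS
  have hb : 0 ≤ b := (sq_nonneg _).trans (h r hr)
  have hup : sSup S ≤ c + √b := csSup_le ⟨r, hr⟩ fun s hs => (hmem s hs).2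
  have hlo : c - √b ≤ sSup S :=
    (hmem r hr).1.trans (le_csSup ⟨c + √b, fun s hs => (hmem s hs).2⟩ hr)
  calc (sSup S - c) ^ 2 ≤ √b ^ 2 := sq_le_sq' (by linarith) (by linarith)
    _ = b := Real.sq_sqrt hb

lemma sq_sub_add_Fid_sq_le_one {n : Type*} [Fintype n] [DecidableEq n] {ρ τ E : Matrix n n ℂ}
    (hρ : ρ.PosSemidef) (hρ1 : ρ.trace = 1) (hτ : τ.PosSemidef) (hτ1 : τ.trace = 1)
    (hE : E.PosSemidef) (hE1 : (1 - E).PosSemidef) :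
    ((E * ρ).trace.re - (E * τ).trace.re) ^ 2 + Fid ρ τ ^ 2 ≤ 1 := by
  have hcompl : ∀ X : Matrix n n ℂ, X.trace = 1 →
      ((1 - E) * X).trace.re = 1 - (E * X).trace.re := fun X hX => by
    rw [Matrix.sub_mul, Matrix.one_mul, Matrix.trace_sub, Complex.sub_re, hX, Complex.one_re]
  have hle : ∀ X : Matrix n n ℂ, X.PosSemidef → X.trace = 1 → (E * X).trace.re ≤ 1 :=
    fun X hX hX1 => by linarith [hcompl X hX1 ▸ re_trace_mul_nonneg hE1 hX]
  have hF := Fid_le_sqrt_mul_add_sqrt_mul hρ hτ hE hE1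
  rw [hcompl ρ hρ1, hcompl τ hτ1] at hF
  exact sq_sub_add_sq_le_one (re_trace_mul_nonneg hE hρ) (hle ρ hρ hρ1)
    (re_trace_mul_nonneg hE hτ) (hle τ hτ hτ1) (Fid_nonneg ρ τ) hF

section POVM
variable {n : Type*} [Fintype n] [DecidableEq n] {d : ℕ}

lemma IsPOVM.posSemidef_one_sub {Λ : Fin d → Matrix n n ℂ} (hΛ : IsPOVM Λ) (z : Fin d) :
    (1 - Λ z).PosSemidef := by
  rw [← hΛ.2, ← Finset.sum_erase_add _ _ (Finset.mem_univ z), add_sub_cancel_right]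
  exact Matrix.posSemidef_sum _ fun w _ => hΛ.1 w

lemma isPOVM_pi_single (i : Fin d) : IsPOVM (Pi.single i (1 : Matrix n n ℂ)) := by
  refine ⟨fun z => ?_, (Finset.sum_pi_single' i 1 Finset.univ).trans (if_pos (Finset.mem_univ i))⟩
  rcases eq_or_ne z i with rfl | h
  · simpa using Matrix.PosSemidef.one
  · simpa [h] using Matrix.PosSemidef.zero

end POVM

section Dephasing
variable {d : ℕ} {γ : Type*}

lemma projZ_eq_single (z : Fin d) : projZ d z = Matrix.single z z 1 := by
  ext i j
  by_cases hi : i = z <;> by_cases hj : j = z <;>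
    simp [projZ, ketZ, Matrix.vecMulVec_apply, hi, hj, Ne.symm]

lemma posSemidef_projZ (z : Fin d) : (projZ d z).PosSemidef :=
  Matrix.posSemidef_vecMulVec_self_star _

lemma projZ_kronecker_one [DecidableEq γ] (z : Fin d) :
    projZ d z ⊗ₖ (1 : Matrix γ γ ℂ) = Matrix.diagonal fun i => if i.1 = z then 1 else 0 := by
  ext ⟨a, c⟩ ⟨a', c'⟩
  simp only [Matrix.kroneckerMap_apply, projZ_eq_single, Matrix.single_apply, Matrix.one_apply,
    Matrix.diagonal_apply, Prod.mk.injEq]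
  split_ifs <;> grind

lemma sum_projZ_kronecker_apply (Λ : Fin d → Matrix γ γ ℂ) (a a' : Fin d) (c c' : γ) :
    (∑ z, projZ d z ⊗ₖ Λ z) (a, c) (a', c') = if a = a' then Λ a c c' else 0 := by
  simp only [Matrix.sum_apply, Matrix.kroneckerMap_apply, projZ_eq_single, Matrix.single_apply,
    ite_mul, one_mul, zero_mul]
  split_ifs with h
  · subst h
    simp
  · exact Finset.sum_eq_zero fun z _ => if_neg fun hz => h (hz.1.symm.trans hz.2)

lemma dephA_apply [Fintype γ] [DecidableEq γ] (M : Matrix (Fin d × γ) (Fin d × γ) ℂ)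
    (a a' : Fin d) (c c' : γ) :
    dephA M (a, c) (a', c') = if a = a' then M (a, c) (a', c') else 0 := by
  simp [dephA, projZ_kronecker_one, Matrix.sum_apply, Matrix.diagonal_mul, Matrix.mul_diagonal]

lemma trace_sum_projZ_kronecker_mul_dephA [Fintype γ] [DecidableEq γ] (Λ : Fin d → Matrix γ γ ℂ)
    (N : Matrix (Fin d × γ) (Fin d × γ) ℂ) :
    ((∑ z, projZ d z ⊗ₖ Λ z) * dephA N).trace = ((∑ z, projZ d z ⊗ₖ Λ z) * N).trace := by
  simp only [Matrix.trace, Matrix.diag, Matrix.mul_apply]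
  refine Finset.sum_congr rfl fun ⟨a, c⟩ _ => Finset.sum_congr rfl fun ⟨a', c'⟩ _ => ?_
  rw [sum_projZ_kronecker_apply, dephA_apply]
  rcases eq_or_ne a a' with rfl | h <;> simp [*, Ne.symm]

lemma trace_sum_projZ_kronecker_mul_one_kronecker [Fintype γ] [DecidableEq γ]
    {Λ : Fin d → Matrix γ γ ℂ} (hΛ : ∑ z, Λ z = 1) (σ : Matrix γ γ ℂ) :
    ((∑ z, projZ d z ⊗ₖ Λ z) * ((1 : Matrix (Fin d) (Fin d) ℂ) ⊗ₖ σ)).trace = σ.trace := by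
  simp only [Finset.sum_mul, Matrix.trace_sum, ← Matrix.mul_kronecker_mul,
    Matrix.trace_kronecker, Matrix.mul_one, projZ_eq_single, Matrix.trace_single_eq_same, one_mul]
  rw [← Matrix.trace_sum, ← Finset.sum_mul, hΛ, Matrix.one_mul]

lemma posSemidef_sum_projZ_kronecker [Fintype γ] {Λ : Fin d → Matrix γ γ ℂ}
    (hΛ : ∀ z, (Λ z).PosSemidef) : (∑ z, projZ d z ⊗ₖ Λ z).PosSemidef :=
  Matrix.posSemidef_sum _ fun z _ => (posSemidef_projZ z).kronecker (hΛ z)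

lemma one_sub_sum_projZ_kronecker [DecidableEq γ] (Λ : Fin d → Matrix γ γ ℂ) :
    1 - ∑ z, projZ d z ⊗ₖ Λ z = ∑ z, projZ d z ⊗ₖ (1 - Λ z) := by
  ext ⟨a, c⟩ ⟨a', c'⟩
  rw [Matrix.sub_apply, sum_projZ_kronecker_apply, sum_projZ_kronecker_apply, Matrix.one_apply]
  split_ifs <;> simp_all

lemma IsPOVM.posSemidef_one_sub_sum_projZ_kronecker [Fintype γ] [DecidableEq γ]
    {Λ : Fin d → Matrix γ γ ℂ} (hΛ : IsPOVM Λ) :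
    (1 - ∑ z, projZ d z ⊗ₖ Λ z).PosSemidef := by
  rw [one_sub_sum_projZ_kronecker]
  exact posSemidef_sum_projZ_kronecker hΛ.posSemidef_one_sub

lemma posSemidef_dephA [Fintype γ] [DecidableEq γ] {M : Matrix (Fin d × γ) (Fin d × γ) ℂ}
    (hM : M.PosSemidef) : (dephA M).PosSemidef := by
  refine Matrix.posSemidef_sum _ fun z _ => ?_
  have h := hM.conjTranspose_mul_mul_same (projZ d z ⊗ₖ (1 : Matrix γ γ ℂ))
  rwa [Matrix.conjTranspose_kronecker, (posSemidef_projZ z).isHermitian.eq,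
    Matrix.conjTranspose_one] at h

lemma trace_dephA [Fintype γ] [DecidableEq γ] (M : Matrix (Fin d × γ) (Fin d × γ) ℂ) :
    (dephA M).trace = M.trace :=
  Finset.sum_congr rfl fun ⟨a, c⟩ _ => by simp [dephA_apply]

end Dephasing

section PartialTrace
variable {α β γ : Type*} [Fintype β]

lemma ptrB_eq_sum_submatrix (ψ : Matrix (α × β × γ) (α × β × γ) ℂ) :
    ptrB ψ = ∑ b, ψ.submatrix (fun p => (p.1, b, p.2)) (fun p => (p.1, b, p.2)) := by
  ext p q
  simp [ptrB, Matrix.sum_apply]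

lemma posSemidef_ptrB {ψ : Matrix (α × β × γ) (α × β × γ) ℂ} (hψ : ψ.PosSemidef) :
    (ptrB ψ).PosSemidef := by
  rw [ptrB_eq_sum_submatrix]
  exact Matrix.posSemidef_sum _ fun b _ => hψ.submatrix _

lemma trace_ptrB [Fintype α] [Fintype γ] (ψ : Matrix (α × β × γ) (α × β × γ) ℂ) :
    (ptrB ψ).trace = ψ.trace := by
  simp only [Matrix.trace, Matrix.diag, ptrB, Fintype.sum_prod_type]
  exact Finset.sum_congr rfl fun a _ => Finset.sum_comm

lemma trace_kronecker_one_kronecker_mul [Fintype α] [Fintype γ] [DecidableEq β]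
    (X : Matrix α α ℂ) (Y : Matrix γ γ ℂ) (ψ : Matrix (α × β × γ) (α × β × γ) ℂ) :
    ((X ⊗ₖ ((1 : Matrix β β ℂ) ⊗ₖ Y)) * ψ).trace = ((X ⊗ₖ Y) * ptrB ψ).trace := by
  simp only [Matrix.trace, Matrix.diag_apply, Matrix.mul_apply, Matrix.kroneckerMap_apply,
    Matrix.one_apply, ite_mul, one_mul, zero_mul, mul_ite, mul_zero, Fintype.sum_prod_type,
    Finset.sum_ite_irrel, Finset.sum_const_zero, Finset.sum_ite_eq, Finset.mem_univ, if_true,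
    ptrB, Finset.mul_sum]
  refine Finset.sum_congr rfl fun a _ => ?_
  rw [Finset.sum_comm]
  refine Finset.sum_congr rfl fun c _ => ?_
  rw [Finset.sum_comm]
  exact Finset.sum_congr rfl fun a' _ => Finset.sum_comm

end PartialTrace

lemma trace_sum_projZ_kronecker_one_kronecker_mul {d : ℕ} {β γ : Type*} [Fintype β]
    [DecidableEq β] [Fintype γ] [DecidableEq γ] (Λ : Fin d → Matrix γ γ ℂ)
    (ψ : Matrix (Fin d × β × γ) (Fin d × β × γ) ℂ) :
    ((∑ z, projZ d z ⊗ₖ ((1 : Matrix β β ℂ) ⊗ₖ Λ z)) * ψ).trace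
      = ((∑ z, projZ d z ⊗ₖ Λ z) * psiZAE ψ).trace := by
  rw [psiZAE, trace_sum_projZ_kronecker_mul_dephA]
  simp only [Finset.sum_mul, Matrix.trace_sum, trace_kronecker_one_kronecker_mul]

/-- for any POVM {Λ_z} on E with Υ = Σ_z |z⟩⟨z| ⊗ Λ_z and any state σ^E,
Tr[Υ(ψ_Z^{AE} − π^A ⊗ σ^E)] = Σ_z Tr[(|z⟩⟨z| ⊗ Λ_z)ψ^{AE}] − 1/d; consequently
(P(Z^A|E)_ψ − 1/d)² + F(ψ_Z^{AE}, π^A ⊗ σ^E)² ≤ 1. -/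
theorem guessing_fidelity_tradeoff {d : ℕ} [NeZero d]
    {β γ : Type*} [Fintype β] [DecidableEq β] [Fintype γ] [DecidableEq γ]
    (ψ : Matrix (Fin d × β × γ) (Fin d × β × γ) ℂ)
    (hψ : ψ.PosSemidef) (hψ1 : ψ.trace = 1)
    (Λ : Fin d → Matrix γ γ ℂ) (hΛ : IsPOVM Λ)
    (σ : Matrix γ γ ℂ) (hσ : σ.PosSemidef) (hσ1 : σ.trace = 1) :
    (Matrix.trace ((∑ z, projZ d z ⊗ₖ Λ z) *
        (psiZAE ψ - (1 / (d : ℂ)) • ((1 : Matrix (Fin d) (Fin d) ℂ) ⊗ₖ σ)))).re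
      = (∑ z, Matrix.trace ((projZ d z ⊗ₖ Λ z) * ptrB ψ)).re - 1 / d ∧
    (PZ_E ψ - 1 / d) ^ 2 +
        Fid (psiZAE ψ) ((1 / (d : ℂ)) • ((1 : Matrix (Fin d) (Fin d) ℂ) ⊗ₖ σ)) ^ 2 ≤ 1 := by
  set τ := (1 / (d : ℂ)) • ((1 : Matrix (Fin d) (Fin d) ℂ) ⊗ₖ σ)
  have hρ : (psiZAE ψ).PosSemidef := posSemidef_dephA (posSemidef_ptrB hψ)
  have hρ1 : (psiZAE ψ).trace = 1 := by rw [psiZAE, trace_dephA, trace_ptrB, hψ1]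
  have hτ : τ.PosSemidef := (Matrix.PosSemidef.one.kronecker hσ).smul (by positivity)
  have hτ1 : τ.trace = 1 := by simp [τ, Matrix.trace_kronecker, hσ1, NeZero.ne]
  have hguess_τ : ∀ Λ' : Fin d → Matrix γ γ ℂ, IsPOVM Λ' →
      ((∑ z, projZ d z ⊗ₖ Λ' z) * τ).trace.re = 1 / d := fun Λ' hΛ' => by
    rw [Matrix.mul_smul, Matrix.trace_smul,
      trace_sum_projZ_kronecker_mul_one_kronecker hΛ'.2, hσ1, smul_eq_mul, mul_one]
    simp
  refine ⟨?_, ?_⟩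
  · rw [Matrix.mul_sub, Matrix.trace_sub, Complex.sub_re, hguess_τ Λ hΛ, psiZAE,
      trace_sum_projZ_kronecker_mul_dephA, Finset.sum_mul, Matrix.trace_sum]
  · rw [← le_sub_iff_add_le, PZ_E]
    refine sq_sub_sSup_le ?_ ?_
    · exact ⟨_, Pi.single 0 1, isPOVM_pi_single 0, rfl⟩
    · rintro r ⟨Λ', hΛ', rfl⟩
      have h := sq_sub_add_Fid_sq_le_one hρ hρ1 hτ hτ1 (posSemidef_sum_projZ_kronecker hΛ'.1)
        hΛ'.posSemidef_one_sub_sum_projZ_kronecker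
      rw [hguess_τ Λ' hΛ', ← trace_sum_projZ_kronecker_one_kronecker_mul (β := β)] at h
      linarith
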